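/- arXiv:0810.2154 — 3 statements merged into one kernel-verified Lean document; each statement's English description precedes it below -/
import Mathlib

section
/- Let A_1, …, A_r be real m×m matrices, let N be a norm on ℝ^m with min_{x≠0} (max_{1≤i≤r} N(A_i x))/N(x) = ρ⁻, let γ > ρ⁻, and define the norm N′ by N′(x) = max{N(x), γ^{-1} max_{1≤i≤r} N(A_i x)}. Assume that also min_{x≠0} (max_{1≤i≤r} N′(A_i x))/N′(x) = ρ⁻. Then every x ≠ 0 with max_{1≤i≤r} N′(A_i x) = ρ⁻·N′(x) satisfies max_{1≤i≤r} N(A_i x) = ρ⁻·N(x) and N(x) > γ^{-1} max_{1≤i≤r} N(A_i x); in particular N′(x) = N(x). -/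
/-!
Since `N ≤ N'` pointwise, `max_i N (A_i x) ≤ max_i N' (A_i x) = ρ⁻ N' x < γ N' x`. If the second
term of the maximum defined `N' x`, the left-hand side would equal `γ N' x`; so `N' x = N x`,
and then `max_i N (A_i x) ≤ ρ⁻ N x`, which the minimality of `ρ⁻` for `N` turns into equality.
-/

open Matrix Filter Topology Bornology Pointwise

/-- `N` is a norm on `ℝ^m`: nonnegative, definite, absolutely homogeneous, subadditive. -/
def IsNorm {m : ℕ} (N : (Fin m → ℝ) → ℝ) : Prop :=
  (∀ x, 0 ≤ N x) ∧ (∀ x, N x = 0 → x = 0) ∧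
    (∀ (t : ℝ) (x), N (t • x) = |t| * N x) ∧ (∀ x y, N (x + y) ≤ N x + N y)

/-- `N` is a seminorm on `ℝ^m`. -/
def IsSeminorm {m : ℕ} (N : (Fin m → ℝ) → ℝ) : Prop :=
  (∀ x, 0 ≤ N x) ∧
    (∀ (t : ℝ) (x), N (t • x) = |t| * N x) ∧ (∀ x y, N (x + y) ≤ N x + N y)

/-- The family `A` is irreducible: the matrices have no common invariant subspace
other than `⊥` and `⊤`. -/
def IsIrreducibleFamily {m r : ℕ} (A : Fin r → Matrix (Fin m) (Fin m) ℝ) : Prop :=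
  ∀ W : Submodule ℝ (Fin m → ℝ), (∀ i, ∀ x ∈ W, (A i).mulVec x ∈ W) → W = ⊥ ∨ W = ⊤

/-- The operator norm of a matrix acting on `ℝ^m` (with its sup norm). -/
noncomputable def matNorm {m : ℕ} (M : Matrix (Fin m) (Fin m) ℝ) : ℝ :=
  ‖LinearMap.toContinuousLinearMap M.mulVecLin‖

/-- The joint spectral radius of the family `A`:
`limsup_n (max over words of length n of the norm of the product)^(1/n)`. -/
noncomputable def jsr {m r : ℕ} (A : Fin r → Matrix (Fin m) (Fin m) ℝ) : ℝ :=
  Filter.atTop.limsup fun n : ℕ =>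
    (⨆ w : Fin n → Fin r, matNorm (List.ofFn fun k => A (w k)).prod) ^ (1 / (n : ℝ))

/-- `maxA A N x = max_i N (A_i x)`. -/
noncomputable def maxA {m r : ℕ} (A : Fin r → Matrix (Fin m) (Fin m) ℝ)
    (N : (Fin m → ℝ) → ℝ) (x : Fin m → ℝ) : ℝ :=
  ⨆ i, N ((A i).mulVec x)

/-- `ρ⁺ = max_{x ≠ 0} (max_i N (A_i x)) / N x`. -/
noncomputable def rhoSup {m r : ℕ} (A : Fin r → Matrix (Fin m) (Fin m) ℝ)
    (N : (Fin m → ℝ) → ℝ) : ℝ :=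
  sSup ((fun x => maxA A N x / N x) '' {x | x ≠ 0})

/-- `ρ⁻ = min_{x ≠ 0} (max_i N (A_i x)) / N x`. -/
noncomputable def rhoInf {m r : ℕ} (A : Fin r → Matrix (Fin m) (Fin m) ℝ)
    (N : (Fin m → ℝ) → ℝ) : ℝ :=
  sInf ((fun x => maxA A N x / N x) '' {x | x ≠ 0})

/-- An averaging function: continuous on positives, `γ t t = t`, and strictly
between `min` and `max` off the diagonal. -/
def IsAveraging (γ : ℝ → ℝ → ℝ) : Prop :=
  ContinuousOn (fun p : ℝ × ℝ => γ p.1 p.2) {p | 0 < p.1 ∧ 0 < p.2} ∧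
    (∀ t, 0 < t → γ t t = t) ∧
    ∀ t s, 0 < t → 0 < s → t ≠ s → min t s < γ t s ∧ γ t s < max t s

/-- The max-relaxation iteration: `‖x‖_{n+1} = max (‖x‖_n, γ_n⁻¹ max_i ‖A_i x‖_n)`
where `γ_n = γ (ρ⁻_n, ρ⁺_n)`. -/
noncomputable def iterN {m r : ℕ} (A : Fin r → Matrix (Fin m) (Fin m) ℝ)
    (γ : ℝ → ℝ → ℝ) (N0 : (Fin m → ℝ) → ℝ) : ℕ → (Fin m → ℝ) → ℝ
  | 0 => N0
  | n + 1 => fun x =>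
      max (iterN A γ N0 n x)
        ((γ (rhoInf A (iterN A γ N0 n)) (rhoSup A (iterN A γ N0 n)))⁻¹ *
          maxA A (iterN A γ N0 n) x)

/-- The normalized norms `‖x‖°_n = ‖x‖_n / ‖e‖_n` of the max-relaxation iteration
(for `n = 0` this equals `‖x‖_0` since `‖e‖_0 = 1`). -/
noncomputable def iterNnorm {m r : ℕ} (A : Fin r → Matrix (Fin m) (Fin m) ℝ)
    (γ : ℝ → ℝ → ℝ) (N0 : (Fin m → ℝ) → ℝ) (e : Fin m → ℝ) (n : ℕ) :
    (Fin m → ℝ) → ℝ :=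
  fun x => iterN A γ N0 n x / iterN A γ N0 n e

/-- `e⁺(N, N') = max_{x ≠ 0} N x / N' x`. -/
noncomputable def ePlus {m : ℕ} (N N' : (Fin m → ℝ) → ℝ) : ℝ :=
  sSup ((fun x => N x / N' x) '' {x | x ≠ 0})

/-- `e⁻(N, N') = min_{x ≠ 0} N x / N' x`. -/
noncomputable def eMinus {m : ℕ} (N N' : (Fin m → ℝ) → ℝ) : ℝ :=
  sInf ((fun x => N x / N' x) '' {x | x ≠ 0})

/-- The eccentricity of the norm `N` with respect to the norm `N'`. -/
noncomputable def ecc {m : ℕ} (N N' : (Fin m → ℝ) → ℝ) : ℝ :=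
  ePlus N N' / eMinus N N'

variable {m r : ℕ} {A : Fin r → Matrix (Fin m) (Fin m) ℝ} {N N' : (Fin m → ℝ) → ℝ}

theorem maxA_nonneg (hN : ∀ y, 0 ≤ N y) (x : Fin m → ℝ) : 0 ≤ maxA A N x :=
  Real.iSup_nonneg fun _ => hN _

theorem maxA_mono (hle : ∀ y, N y ≤ N' y) (x : Fin m → ℝ) : maxA A N x ≤ maxA A N' x :=
  ciSup_mono (Set.finite_range _).bddAbove fun _ => hle _

theorem rhoInf_mul_le_maxA (hN : ∀ y, 0 ≤ N y) {x : Fin m → ℝ} (hx : x ≠ 0) :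
    rhoInf A N * N x ≤ maxA A N x := by
  rcases (hN x).eq_or_lt with hNx | hNx
  · rw [← hNx, mul_zero]
    exact maxA_nonneg hN x
  have hbdd : BddBelow ((fun y => maxA A N y / N y) '' {y | y ≠ 0}) := by
    refine ⟨0, ?_⟩
    rintro _ ⟨y, -, rfl⟩
    exact div_nonneg (maxA_nonneg hN y) (hN y)
  exact (le_div_iff₀ hNx).mp (csInf_le hbdd ⟨x, hx, rfl⟩)

theorem inv_mul_maxA_lt_of_maxA_lt {γ : ℝ}
    (hN' : ∀ y, N' y = max (N y) (γ⁻¹ * maxA A N y)) {x : Fin m → ℝ} (hNx : 0 < N x)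
    (hlt : maxA A N' x < γ * N' x) :
    γ⁻¹ * maxA A N x < N x := by
  by_contra! hge
  have hγ : γ ≠ 0 := by
    rintro rfl
    simp only [_root_.inv_zero, zero_mul] at hge
    exact hge.not_gt hNx
  have hN'x : γ * N' x = maxA A N x := by
    rw [hN' x, max_eq_right hge, mul_inv_cancel_left₀ hγ]
  have hmono : maxA A N x ≤ maxA A N' x :=
    maxA_mono (fun y => (le_max_left _ _).trans_eq (hN' y).symm) x
  linarith

theorem stmt13_general {m r : ℕ}
    (A : Fin r → Matrix (Fin m) (Fin m) ℝ)
    (N : (Fin m → ℝ) → ℝ) (hN : IsNorm N)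
    (ρminus : ℝ) (hmin : rhoInf A N = ρminus)
    (γ : ℝ) (hγ : ρminus < γ)
    (N' : (Fin m → ℝ) → ℝ) (hN' : ∀ x, N' x = max (N x) (γ⁻¹ * maxA A N x)) :
    ∀ x : Fin m → ℝ, x ≠ 0 → maxA A N' x = ρminus * N' x →
      maxA A N x = ρminus * N x ∧ γ⁻¹ * maxA A N x < N x ∧ N' x = N x := by
  intro x hx hmax
  have hNx : 0 < N x := (hN.1 x).lt_of_ne' fun h => hx (hN.2.1 x h)
  have hle : ∀ y, N y ≤ N' y := fun y => (le_max_left _ _).trans_eq (hN' y).symm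
  have hstrict : γ⁻¹ * maxA A N x < N x := by
    refine inv_mul_maxA_lt_of_maxA_lt hN' hNx ?_
    rw [hmax]
    exact mul_lt_mul_of_pos_right hγ (hNx.trans_le (hle x))
  have hN'x : N' x = N x := (hN' x).trans (max_eq_left hstrict.le)
  refine ⟨le_antisymm ?_ (hmin ▸ rhoInf_mul_le_maxA hN.1 hx), hstrict, hN'x⟩
  calc maxA A N x ≤ maxA A N' x := maxA_mono hle x
    _ = ρminus * N x := by rw [hmax, hN'x]

/-- if `min_{x≠0} (max_i N (A_i x))/N x = ρ⁻`, `γ > ρ⁻`,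
`N' x = max (N x) (γ⁻¹ max_i N (A_i x))` and also `min_{x≠0} (max_i N' (A_i x))/N' x = ρ⁻`,
then every `x ≠ 0` with `max_i N' (A_i x) = ρ⁻ N' x` satisfies
`max_i N (A_i x) = ρ⁻ N x` and `N x > γ⁻¹ max_i N (A_i x)`; in particular `N' x = N x`. -/
theorem stmt13 {m r : ℕ} (hm : 1 ≤ m) (hr : 1 ≤ r)
    (A : Fin r → Matrix (Fin m) (Fin m) ℝ)
    (N : (Fin m → ℝ) → ℝ) (hN : IsNorm N)
    (ρminus : ℝ) (hmin : rhoInf A N = ρminus)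
    (γ : ℝ) (hγ : ρminus < γ)
    (N' : (Fin m → ℝ) → ℝ) (hN' : ∀ x, N' x = max (N x) (γ⁻¹ * maxA A N x))
    (hmin' : rhoInf A N' = ρminus) :
    ∀ x : Fin m → ℝ, x ≠ 0 → maxA A N' x = ρminus * N' x →
      maxA A N x = ρminus * N x ∧ γ⁻¹ * maxA A N x < N x ∧ N' x = N x :=
  stmt13_general A N hN ρminus hmin γ hγ N' hN'
end

section
/- Let A_1, …, A_r be real m×m matrices, let γ > 0, and let N_j (j = 0, 1, 2, …) be norms on ℝ^m satisfying N_{j+1}(x) = max{N_j(x), γ^{-1} max_{1≤i≤r} N_j(A_i x)} for all x. Suppose there exist a norm ‖·‖ on ℝ^m and a constant μ < ∞ such that N_j(x) ≤ μ·‖x‖ for all j and all x. Then the sequence N_j(x) is nondecreasing in j and converges for every x; the limit N(x) = lim_{j→∞} N_j(x) is a norm on ℝ^m; and N satisfies max_{1≤i≤r} N(A_i x) ≤ γ·N(x) for all x ∈ ℝ^m. -/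
open Matrix Filter Topology Bornology Pointwise

/-!
The recursion makes `j ↦ N_j x` nondecreasing, and the uniform bound `μ ‖x‖` makes it bounded,
so it converges to `N x = sup_j N_j x`. Homogeneity and the triangle inequality pass to pointwise
limits, and `N ≥ N_0` gives definiteness. Finally `N_j (A_i x) ≤ γ N_{j+1} x ≤ γ N x` by the
recursion, and letting `j → ∞` gives `N (A_i x) ≤ γ N x`.
-/

theorem IsNorm.isSeminorm {m : ℕ} {N : (Fin m → ℝ) → ℝ} (hN : IsNorm N) : IsSeminorm N :=
  ⟨hN.1, hN.2.2⟩

theorem IsSeminorm.of_tendsto {m : ℕ} {ι : Type*} {l : Filter ι} [l.NeBot]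
    {N : ι → (Fin m → ℝ) → ℝ} {L : (Fin m → ℝ) → ℝ} (hN : ∀ j, IsSeminorm (N j))
    (hlim : ∀ x, Tendsto (fun j => N j x) l (𝓝 (L x))) : IsSeminorm L := by
  refine ⟨fun x => ?_, fun t x => ?_, fun x y => ?_⟩
  · exact ge_of_tendsto' (hlim x) fun j => (hN j).1 x
  · refine tendsto_nhds_unique (hlim (t • x)) ?_
    simpa only [(hN _).2.1 t x] using (hlim x).const_mul |t|
  · exact le_of_tendsto_of_tendsto' (hlim (x + y)) ((hlim x).add (hlim y))
      fun j => (hN j).2.2 x y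

theorem IsSeminorm.isNorm_of_le {m : ℕ} {N N₀ : (Fin m → ℝ) → ℝ} (hN : IsSeminorm N)
    (hN₀ : IsNorm N₀) (hle : ∀ x, N₀ x ≤ N x) : IsNorm N :=
  ⟨hN.1, fun x hx => hN₀.2.1 x (le_antisymm (hx ▸ hle x) (hN₀.1 x)), hN.2⟩

section maxA

variable {m r : ℕ} (A : Fin r → Matrix (Fin m) (Fin m) ℝ) (N : (Fin m → ℝ) → ℝ)

theorem le_maxA (x : Fin m → ℝ) (i : Fin r) : N ((A i).mulVec x) ≤ maxA A N x :=
  le_ciSup (f := fun i => N ((A i).mulVec x)) (Set.finite_range _).bddAbove i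

-- For `r = 0` the supremum is empty and `maxA` takes the junk value `0`, hence `0 ≤ c`.
theorem maxA_le {x : Fin m → ℝ} {c : ℝ} (h : ∀ i, N ((A i).mulVec x) ≤ c) (hc : 0 ≤ c) :
    maxA A N x ≤ c :=
  Real.iSup_le h hc

end maxA

theorem stmt15_general {m r : ℕ}
    (A : Fin r → Matrix (Fin m) (Fin m) ℝ)
    (γ : ℝ) (hγ : 0 < γ)
    (Nseq : ℕ → (Fin m → ℝ) → ℝ) (hN : ∀ j, IsNorm (Nseq j))
    (hrec : ∀ (j : ℕ) (x), Nseq (j + 1) x = max (Nseq j x) (γ⁻¹ * maxA A (Nseq j) x))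
    (B : (Fin m → ℝ) → ℝ) (μ : ℝ)
    (hub : ∀ (j : ℕ) (x), Nseq j x ≤ μ * B x) :
    (∀ x, Monotone fun j : ℕ => Nseq j x) ∧
      ∃ N : (Fin m → ℝ) → ℝ,
        (∀ x, Tendsto (fun j : ℕ => Nseq j x) atTop (𝓝 (N x))) ∧
          IsNorm N ∧ ∀ x, maxA A N x ≤ γ * N x := by
  have mono : ∀ x, Monotone fun j => Nseq j x := fun x =>
    monotone_nat_of_le_succ fun j => (hrec j x).symm ▸ le_max_left _ _
  have bdd : ∀ x, BddAbove (Set.range fun j => Nseq j x) := fun x =>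
    ⟨μ * B x, by rintro _ ⟨j, rfl⟩; exact hub j x⟩
  set N := fun x => ⨆ j, Nseq j x
  have hlim : ∀ x, Tendsto (fun j => Nseq j x) atTop (𝓝 (N x)) := fun x =>
    tendsto_atTop_ciSup (mono x) (bdd x)
  have hle : ∀ j x, Nseq j x ≤ N x := fun j x => le_ciSup (bdd x) j
  have hNorm : IsNorm N :=
    (IsSeminorm.of_tendsto (fun j => (hN j).isSeminorm) hlim).isNorm_of_le (hN 0) (hle 0)
  have step : ∀ j x, maxA A (Nseq j) x ≤ γ * Nseq (j + 1) x := fun j x => by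
    rw [← inv_mul_le_iff₀ hγ, hrec]
    exact le_max_right _ _
  refine ⟨mono, N, hlim, hNorm, fun x =>
    maxA_le A N (fun i => ?_) (mul_nonneg hγ.le (hNorm.1 x))⟩
  refine le_of_tendsto' (hlim _) fun j => ?_
  calc Nseq j ((A i).mulVec x) ≤ γ * Nseq (j + 1) x := (le_maxA A _ x i).trans (step j x)
    _ ≤ γ * N x := by gcongr; exact hle _ x

/-- if the norms `N_j` satisfy `N_{j+1} x = max (N_j x) (γ⁻¹ max_i N_j (A_i x))`
and are uniformly dominated by `μ·‖·‖` for some norm `‖·‖`, then `j ↦ N_j x` is nondecreasing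
and converges for every `x`, the limit `N` is a norm, and `max_i N (A_i x) ≤ γ N x`. -/
theorem stmt15 {m r : ℕ} (hm : 1 ≤ m) (hr : 1 ≤ r)
    (A : Fin r → Matrix (Fin m) (Fin m) ℝ)
    (γ : ℝ) (hγ : 0 < γ)
    (Nseq : ℕ → (Fin m → ℝ) → ℝ) (hN : ∀ j, IsNorm (Nseq j))
    (hrec : ∀ (j : ℕ) (x), Nseq (j + 1) x = max (Nseq j x) (γ⁻¹ * maxA A (Nseq j) x))
    (B : (Fin m → ℝ) → ℝ) (hB : IsNorm B) (μ : ℝ)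
    (hub : ∀ (j : ℕ) (x), Nseq j x ≤ μ * B x) :
    (∀ x, Monotone fun j : ℕ => Nseq j x) ∧
      ∃ N : (Fin m → ℝ) → ℝ,
        (∀ x, Tendsto (fun j : ℕ => Nseq j x) atTop (𝓝 (N x))) ∧
          IsNorm N ∧ ∀ x, maxA A N x ≤ γ * N x :=
  stmt15_general A γ hγ Nseq hN hrec B μ hub
end

section
/- Let A_1, …, A_r be real m×m matrices, let γ > 0 and ρ⁺ > 0, and let N_j (j = 0, 1, 2, …) be norms on ℝ^m satisfying N_{j+1}(x) = max{N_j(x), γ^{-1} max_{1≤i≤r} N_j(A_i x)} for all x, such that there exist a norm ‖·‖ and μ < ∞ with N_j(x) ≤ μ·‖x‖ for all j and x, and such that max_{x≠0} (max_{1≤i≤r} N_j(A_i x))/N_j(x) = ρ⁺ for every j. Then ρ⁺ ≤ γ. -/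
open Matrix Filter Topology Bornology Pointwise

/-!
The recursion gives `max_i N_j (A_i x) ≤ γ N_{j+1} x`, hence `ρ⁺ ≤ γ · max_x N_{j+1} x / N_j x`
for every `j`. The norms `N_j` increase and are uniformly bounded by a multiple of `‖·‖`, so
they are equi-Lipschitz and converge pointwise to a continuous limit; by Dini's theorem the
convergence is uniform on the unit sphere. As all `N_j` dominate `N_0 ≥ c ‖·‖`, the ratio
`N_{j+1} / N_j` tends to `1` uniformly, which forces `ρ⁺ ≤ γ`.
-/

lemma continuous_of_le_add_mul_norm_sub {E : Type*} [SeminormedAddCommGroup E] {f : E → ℝ}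
    {K : ℝ} (h : ∀ x y, f x ≤ f y + K * ‖x - y‖) : Continuous f :=
  (LipschitzWith.of_le_add_mul' K fun x y => by simpa only [dist_eq_norm] using h x y).continuous

namespace IsSeminorm

variable {m : ℕ} {N : (Fin m → ℝ) → ℝ}

lemma map_zero (hN : IsSeminorm N) : N 0 = 0 := by
  simpa using hN.2.1 0 0

lemma le_mul_norm (hN : IsSeminorm N) (x : Fin m → ℝ) :
    N x ≤ (∑ i, N (Pi.single i 1)) * ‖x‖ :=
  calc N x = N (∑ i, x i • Pi.single i 1) := by rw [← pi_eq_sum_univ']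
    _ ≤ ∑ i, N (x i • Pi.single i 1) :=
      Finset.le_sum_of_subadditive N hN.map_zero.le hN.2.2 _ _
    _ = ∑ i, |x i| * N (Pi.single i 1) := by simp only [hN.2.1]
    _ ≤ ∑ i, ‖x‖ * N (Pi.single i 1) := by
      gcongr with i
      · exact hN.1 _
      · exact norm_le_pi_norm x i
    _ = (∑ i, N (Pi.single i 1)) * ‖x‖ := by rw [Finset.sum_mul]; simp only [mul_comm]

lemma le_add_mul_norm_sub (hN : IsSeminorm N) {K : ℝ} (hK : ∀ x, N x ≤ K * ‖x‖)
    (x y : Fin m → ℝ) : N x ≤ N y + K * ‖x - y‖ :=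
  calc N x = N (y + (x - y)) := by rw [add_sub_cancel]
    _ ≤ N y + N (x - y) := hN.2.2 _ _
    _ ≤ N y + K * ‖x - y‖ := by gcongr; exact hK _

lemma continuous (hN : IsSeminorm N) : Continuous N :=
  continuous_of_le_add_mul_norm_sub (hN.le_add_mul_norm_sub hN.le_mul_norm)

lemma eq_norm_mul_apply_inv_norm_smul (hN : IsSeminorm N) {x : Fin m → ℝ} (hx : x ≠ 0) :
    N x = ‖x‖ * N (‖x‖⁻¹ • x) := by
  rw [hN.2.1, abs_inv, abs_norm, mul_inv_cancel_left₀ (norm_ne_zero_iff.2 hx)]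

end IsSeminorm

lemma inv_norm_smul_mem_sphere {m : ℕ} {x : Fin m → ℝ} (hx : x ≠ 0) :
    ‖x‖⁻¹ • x ∈ Metric.sphere (0 : Fin m → ℝ) 1 := by
  rw [mem_sphere_zero_iff_norm, norm_smul, norm_inv, norm_norm,
    inv_mul_cancel₀ (norm_ne_zero_iff.2 hx)]

namespace IsNorm

variable {m : ℕ} {N : (Fin m → ℝ) → ℝ}

lemma isSeminorm_s16 (hN : IsNorm N) : IsSeminorm N := ⟨hN.1, hN.2.2⟩

lemma pos (hN : IsNorm N) {x : Fin m → ℝ} (hx : x ≠ 0) : 0 < N x :=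
  (hN.1 x).lt_of_ne' (mt (hN.2.1 x) hx)

lemma exists_pos_mul_norm_le (hN : IsNorm N) : ∃ c > 0, ∀ x, c * ‖x‖ ≤ N x := by
  obtain ⟨c, hc, hcN⟩ := (isCompact_sphere (0 : Fin m → ℝ) 1).exists_forall_le'
    hN.isSeminorm_s16.continuous.continuousOn
    fun u hu => hN.pos (by rintro rfl; simp at hu)
  refine ⟨c, hc, fun x => ?_⟩
  rcases eq_or_ne x 0 with rfl | hx
  · simp [hN.isSeminorm_s16.map_zero]
  · rw [hN.isSeminorm_s16.eq_norm_mul_apply_inv_norm_smul hx, mul_comm]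
    exact mul_le_mul_of_nonneg_left (hcN _ (inv_norm_smul_mem_sphere hx)) (norm_nonneg x)

end IsNorm

section MonotoneNorms

variable {m : ℕ} {N : ℕ → (Fin m → ℝ) → ℝ} {K : ℝ}

lemma eventually_le_add_mul_norm_of_monotone (hN : ∀ j, IsSeminorm (N j)) (hmono : Monotone N)
    (hK : ∀ j x, N j x ≤ K * ‖x‖) {δ : ℝ} (hδ : 0 < δ) :
    ∀ᶠ j in atTop, ∀ k x, N k x ≤ N j x + δ * ‖x‖ := by
  have hbdd : ∀ x, BddAbove (Set.range fun j => N j x) := fun x =>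
    ⟨K * ‖x‖, by rintro _ ⟨j, rfl⟩; exact hK j x⟩
  set L : (Fin m → ℝ) → ℝ := fun x => ⨆ j, N j x
  have hle_L : ∀ j x, N j x ≤ L x := fun j x => le_ciSup (hbdd x) j
  have hL : Continuous L := continuous_of_le_add_mul_norm_sub fun x y =>
    ciSup_le fun j => ((hN j).le_add_mul_norm_sub (hK j) x y).trans (by gcongr; exact hle_L j y)
  have hunif : TendstoUniformlyOn N L atTop (Metric.sphere 0 1) :=
    Monotone.tendstoUniformlyOn_of_forall_tendsto (isCompact_sphere 0 1)
      (fun j => (hN j).continuous.continuousOn) (fun x _ _ _ hij => hmono hij x)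
      hL.continuousOn fun x _ => tendsto_atTop_ciSup (fun _ _ hij => hmono hij x) (hbdd x)
  filter_upwards [Metric.tendstoUniformlyOn_iff.1 hunif δ hδ] with j hj k x
  rcases eq_or_ne x 0 with rfl | hx
  · simp [(hN k).map_zero, (hN j).map_zero]
  · set u := ‖x‖⁻¹ • x
    have hu : N k u ≤ N j u + δ := by
      have := hj u (inv_norm_smul_mem_sphere hx)
      rw [Real.dist_eq] at this
      linarith [hle_L k u, le_abs_self (L u - N j u)]
    rw [(hN k).eq_norm_mul_apply_inv_norm_smul hx, (hN j).eq_norm_mul_apply_inv_norm_smul hx]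
    nlinarith [norm_nonneg x]

lemma eventually_le_one_add_mul_of_monotone (hN : ∀ j, IsNorm (N j)) (hmono : Monotone N)
    (hK : ∀ j x, N j x ≤ K * ‖x‖) {ε : ℝ} (hε : 0 < ε) :
    ∀ᶠ j in atTop, ∀ k x, N k x ≤ (1 + ε) * N j x := by
  obtain ⟨c, hc, hcN⟩ := (hN 0).exists_pos_mul_norm_le
  filter_upwards [eventually_le_add_mul_norm_of_monotone (fun j => (hN j).isSeminorm_s16) hmono hK
    (mul_pos hε hc)] with j hj k x
  calc N k x ≤ N j x + ε * c * ‖x‖ := hj k x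
    _ ≤ N j x + ε * N j x := by
      rw [mul_assoc]
      gcongr
      exact (hcN x).trans (hmono (Nat.zero_le j) x)
    _ = (1 + ε) * N j x := by ring

end MonotoneNorms

lemma rhoSup_le {m r : ℕ} {A : Fin r → Matrix (Fin m) (Fin m) ℝ} {N : (Fin m → ℝ) → ℝ} {c : ℝ}
    (hc : 0 ≤ c) (hN : ∀ x, 0 ≤ N x) (h : ∀ x, maxA A N x ≤ c * N x) : rhoSup A N ≤ c :=
  Real.sSup_le (by rintro _ ⟨x, -, rfl⟩; exact div_le_of_le_mul₀ (hN x) hc (h x)) hc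

theorem stmt16_general {m r : ℕ}
    (A : Fin r → Matrix (Fin m) (Fin m) ℝ)
    (γ ρplus : ℝ) (hγ : 0 < γ)
    (Nseq : ℕ → (Fin m → ℝ) → ℝ) (hN : ∀ j, IsNorm (Nseq j))
    (hrec : ∀ (j : ℕ) (x), Nseq (j + 1) x = max (Nseq j x) (γ⁻¹ * maxA A (Nseq j) x))
    (B : (Fin m → ℝ) → ℝ) (hB : IsNorm B) (μ : ℝ)
    (hub : ∀ (j : ℕ) (x), Nseq j x ≤ μ * B x)
    (hsup : ∀ j : ℕ, rhoSup A (Nseq j) = ρplus) :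
    ρplus ≤ γ := by
  have hmono : Monotone Nseq :=
    monotone_nat_of_le_succ fun j x => (le_max_left _ _).trans (hrec j x).ge
  have hK : ∀ j x, Nseq j x ≤ (max μ 0 * ∑ i, B (Pi.single i 1)) * ‖x‖ := fun j x =>
    calc Nseq j x ≤ μ * B x := hub j x
      _ ≤ max μ 0 * B x := mul_le_mul_of_nonneg_right (le_max_left _ _) (hB.1 x)
      _ ≤ max μ 0 * ((∑ i, B (Pi.single i 1)) * ‖x‖) :=
        mul_le_mul_of_nonneg_left (hB.isSeminorm_s16.le_mul_norm x) (le_max_right _ _)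
      _ = _ := (mul_assoc _ _ _).symm
  have hstep : ∀ j x, maxA A (Nseq j) x ≤ γ * Nseq (j + 1) x := fun j x =>
    (inv_mul_le_iff₀ hγ).1 ((le_max_right _ _).trans (hrec j x).ge)
  refine le_of_forall_pos_le_add fun ε hε => ?_
  obtain ⟨j, hj⟩ := (eventually_le_one_add_mul_of_monotone hN hmono hK (div_pos hε hγ)).exists
  rw [← hsup j]
  refine rhoSup_le (by positivity) (hN j).1 fun x => ?_
  calc maxA A (Nseq j) x ≤ γ * Nseq (j + 1) x := hstep j x
    _ ≤ γ * ((1 + ε / γ) * Nseq j x) := mul_le_mul_of_nonneg_left (hj _ x) hγ.le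
    _ = (γ + ε) * Nseq j x := by field_simp

/-- if the norms `N_j` satisfy `N_{j+1} x = max (N_j x) (γ⁻¹ max_i N_j (A_i x))`,
are uniformly dominated by `μ·‖·‖`, and `max_{x≠0} (max_i N_j (A_i x))/N_j x = ρ⁺ > 0`
for every `j`, then `ρ⁺ ≤ γ`. -/
theorem stmt16 {m r : ℕ} (hm : 1 ≤ m) (hr : 1 ≤ r)
    (A : Fin r → Matrix (Fin m) (Fin m) ℝ)
    (γ ρplus : ℝ) (hγ : 0 < γ) (hρ : 0 < ρplus)
    (Nseq : ℕ → (Fin m → ℝ) → ℝ) (hN : ∀ j, IsNorm (Nseq j))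
    (hrec : ∀ (j : ℕ) (x), Nseq (j + 1) x = max (Nseq j x) (γ⁻¹ * maxA A (Nseq j) x))
    (B : (Fin m → ℝ) → ℝ) (hB : IsNorm B) (μ : ℝ)
    (hub : ∀ (j : ℕ) (x), Nseq j x ≤ μ * B x)
    (hsup : ∀ j : ℕ, rhoSup A (Nseq j) = ρplus) :
    ρplus ≤ γ :=
  stmt16_general A γ ρplus hγ Nseq hN hrec B hB μ hub hsup
end
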